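/- arXiv:2101.03978 — 4 statements merged into one kernel-verified Lean document; each statement's English description precedes it below -/
import Mathlib

section
/- Let σ be a permutation of a finite set S of positive integers whose action on S is a single cycle of length m, and let b ≥ 1 be an integer. Then the number of b-local minima of σ is at most m/(b+1). -/
/-!
If `x` and `y` are `b`-local minima and `σ^i x = σ^j y` with `i ≠ j` in `[0, b]`, then
`y = σ^(i-j) x > x` and `x = σ^(j-i) y > y`, which is absurd. Hence `(x, k) ↦ σ^k x` is injective
on (local minima) × `[0, b]`, and it lands in `S` because `σ` preserves `S`.
-/

namespace Equiv.Perm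

variable {α : Type*}

-- Reducible, so that `Finset.filter` finds the decidability instance of the unfolded predicate.
abbrev IsLocalMin [Preorder α] (σ : Perm α) (b : ℕ) (x : α) : Prop :=
  ∀ k ∈ Finset.Icc (-(b : ℤ)) b, k ≠ 0 → x < (σ ^ k) x

theorem mapsTo_of_apply_eq_self_of_notMem (σ : Perm α) {s : Set α}
    (h : ∀ x ∉ s, σ x = x) : Set.MapsTo σ s s := by
  intro x hx
  by_contra hσx
  exact hσx (by rwa [σ.injective (h _ hσx)])

theorem zpow_sub_apply_of_pow_apply_eq (σ : Perm α) {x y : α} {i j : ℕ}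
    (h : (σ ^ i) x = (σ ^ j) y) : (σ ^ ((i : ℤ) - j)) x = y := by
  rw [sub_eq_neg_add, zpow_add, zpow_neg, zpow_natCast, zpow_natCast, mul_apply, h,
    inv_eq_iff_eq]

variable [Preorder α] {σ : Perm α} {b i j : ℕ} {x y : α}

theorem IsLocalMin.eq_of_pow_apply_eq (hx : σ.IsLocalMin b x) (hy : σ.IsLocalMin b y)
    (hi : i ≤ b) (hj : j ≤ b) (h : (σ ^ i) x = (σ ^ j) y) : i = j := by
  by_contra hij
  have hxy : x < y := by
    simpa [zpow_sub_apply_of_pow_apply_eq σ h] using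
      hx ((i : ℤ) - j) (Finset.mem_Icc.mpr ⟨by omega, by omega⟩) (by omega)
  have hyx : y < x := by
    simpa [zpow_sub_apply_of_pow_apply_eq σ h.symm] using
      hy ((j : ℤ) - i) (Finset.mem_Icc.mpr ⟨by omega, by omega⟩) (by omega)
  exact lt_asymm hxy hyx

theorem card_filter_isLocalMin_mul_le (S : Finset α) (hS : Set.MapsTo σ S S)
    [DecidablePred (σ.IsLocalMin b)] :
    (S.filter (σ.IsLocalMin b)).card * (b + 1) ≤ S.card := by
  rw [← Finset.card_range (b + 1), ← Finset.card_product]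
  refine Finset.card_le_card_of_injOn (fun p => (σ ^ p.2) p.1) ?_ ?_
  · rintro ⟨x, k⟩ hxk
    simp only [Finset.coe_product, Set.mem_prod, Finset.coe_filter, Set.mem_ofPred_eq] at hxk
    simpa only [coe_pow] using hS.iterate k hxk.1.1
  · rintro ⟨x, i⟩ hxi ⟨y, j⟩ hyj h
    simp only [Finset.coe_product, Set.mem_prod, Finset.coe_filter, Set.mem_ofPred_eq,
      Finset.coe_range, Set.mem_Iio] at hxi hyj h
    obtain rfl : i = j :=
      hxi.1.2.eq_of_pow_apply_eq hyj.1.2 (by omega) (by omega) h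
    exact Prod.ext ((σ ^ i).injective h) rfl

end Equiv.Perm

theorem card_local_minima_le_general (σ : Equiv.Perm ℕ) (S : Finset ℕ) (b : ℕ)
    (hfix : ∀ i ∉ S, σ i = i)
    (m : ℕ) (hm : m = S.card) :
    (((S.filter fun x =>
        ∀ k ∈ Finset.Icc (-(b : ℤ)) (b : ℤ), k ≠ 0 → x < (σ ^ k) x).card : ℝ))
      ≤ (m : ℝ) / ((b : ℝ) + 1) := by
  rw [le_div_iff₀ (by positivity), hm]
  exact_mod_cast
    σ.card_filter_isLocalMin_mul_le (b := b) S (σ.mapsTo_of_apply_eq_self_of_notMem hfix)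

/-- Let `σ` be a permutation of a finite set `S` of positive integers whose
action on `S` is a single cycle of length `m`, and let `b ≥ 1`.  An element `x ∈ S` is a
`b`-local minimum if `x < σ^k(x)` for every `k ∈ {−b, …, b} \ {0}`.  Then the number of
`b`-local minima of `σ` is at most `m / (b + 1)`. -/
theorem card_local_minima_le (σ : Equiv.Perm ℕ) (S : Finset ℕ) (b : ℕ) (hb : 1 ≤ b)
    (hpos : ∀ i ∈ S, 0 < i)
    (hfix : ∀ i ∉ S, σ i = i)
    (hcycle : ∀ x ∈ S, ∀ y ∈ S, ∃ k : ℕ, (⇑σ)^[k] x = y)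
    (m : ℕ) (hm : m = S.card) :
    (((S.filter fun x =>
        ∀ k ∈ Finset.Icc (-(b : ℤ)) (b : ℤ), k ≠ 0 → x < (σ ^ k) x).card : ℝ))
      ≤ (m : ℝ) / ((b : ℝ) + 1) :=
  card_local_minima_le_general σ S b hfix m hm
end

section
/- For every cycle C of π and every integer r ≥ 1, the number of elements of C on level r satisfies |E_r ∩ C| ≤ |C| / (b+1)^{r−1}. -/
/-!
Write `E = E_r`, `S = E_{r+1}` and `f = π_r`; on `E`, `f⁻¹` is `nextIn π⁻¹ E`. If `i', i ∈ S` and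
`i = f^d i'` with `1 ≤ d ≤ b`, then `i' < f^d i' = i` and `i < f^{-d} i = i'`, which is absurd.
As `C` is `π`-invariant, `f` maps `E ∩ C` injectively into itself, so the sets
`{f^k i | 0 ≤ k ≤ b}` for `i ∈ S ∩ C` are pairwise disjoint subsets of `E ∩ C` of size `b + 1`.
Hence `|S ∩ C| (b + 1) ≤ |E ∩ C|`; iterate over `r`.
-/

attribute [local instance] Classical.propDecidable

open Finset

variable {n : ℕ}

/-- The first element of `E` encountered strictly after `x` when following `π` along its cycle
(`x` itself if no element of `E` is reachable).  For `E = E_r` this is the map `π_r`. -/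
noncomputable def nextIn (π : Equiv.Perm (Fin n)) (E : Finset (Fin n)) (x : Fin n) : Fin n :=
  if h : ∃ k, 0 < k ∧ (⇑π)^[k] x ∈ E then (⇑π)^[Nat.find h] x else x

/-- `b`-fold iteration of `nextIn`; for `E = E_r` this is `π_r^b`. -/
noncomputable def stepB (π : Equiv.Perm (Fin n)) (b : ℕ) (E : Finset (Fin n)) (x : Fin n) :
    Fin n :=
  (nextIn π E)^[b] x

/-- `level π b r` is the set `E_{r+1}` (0-indexed): `level π b 0 = E_1 = [n]`, and `E_{r+1}`
consists of the elements `i` of `E_r` with `i < π_r^k(i)` for all `k ∈ {−b,…,b} \ {0}`. -/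
noncomputable def level (π : Equiv.Perm (Fin n)) (b : ℕ) : ℕ → Finset (Fin n)
  | 0 => Finset.univ
  | r + 1 =>
    (level π b r).filter fun i =>
      (∀ k ∈ Finset.Icc 1 b, i < (nextIn π (level π b r))^[k] i) ∧
      (∀ k ∈ Finset.Icc 1 b, i < (nextIn π⁻¹ (level π b r))^[k] i)

/-- The cycle of `π` containing `x`, as a finset. -/
def cycleOfF (π : Equiv.Perm (Fin n)) (x : Fin n) : Finset (Fin n) :=
  (Finset.range n).image fun k => (⇑π)^[k] x

theorem Set.LeftInvOn.iterate {α : Type*} {f g : α → α} {s : Set α} (h : Set.LeftInvOn g f s)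
    (hf : Set.MapsTo f s s) (k : ℕ) : Set.LeftInvOn g^[k] f^[k] s := by
  induction k with
  | zero => exact fun _ _ => rfl
  | succ k ih =>
    rw [Function.iterate_succ, Function.iterate_succ']
    exact ih.comp h (hf.iterate k)

theorem card_mul_succ_le_of_iterate_ne {α : Type*} {f : α → α} {S T : Finset α} {b : ℕ}
    (hf : Set.MapsTo f T T) (hinj : Set.InjOn f T) (hST : S ⊆ T)
    (hsep : ∀ i ∈ S, ∀ i' ∈ S, ∀ d ∈ Icc 1 b, f^[d] i' ≠ i) :
    #S * (b + 1) ≤ #T := by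
  have key : ∀ i ∈ S, ∀ i' ∈ S, ∀ k k', k ≤ k' → k' ≤ b → f^[k] i = f^[k'] i' →
      i = i' ∧ k = k' := by
    intro i hi i' hi' k k' hkk' hk' heq
    have hd : f^[k'] i' = f^[k] (f^[k' - k] i') := by
      rw [← Function.iterate_add_apply, Nat.add_sub_cancel' hkk']
    have hi_eq : f^[k' - k] i' = i :=
      ((hinj.iterate hf k) (hf.iterate _ (hST hi')) (hST hi) (hd ▸ heq.symm))
    by_cases hkk : k = k'
    · exact ⟨by simpa [hkk] using hi_eq.symm, hkk⟩
    · exact absurd hi_eq (hsep i hi i' hi' _ (mem_Icc.2 ⟨by omega, by omega⟩))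
  have hmaps : Set.MapsTo (fun p : α × ℕ => f^[p.2] p.1) ↑(S ×ˢ range (b + 1)) T := by
    rintro ⟨i, k⟩ hp
    exact hf.iterate k (hST (mem_product.1 hp).1)
  have hinjOn : Set.InjOn (fun p : α × ℕ => f^[p.2] p.1) ↑(S ×ˢ range (b + 1)) := by
    rintro ⟨i, k⟩ hp ⟨i', k'⟩ hp' heq
    simp only [coe_product, Set.mem_prod, mem_coe, mem_range] at hp hp' heq
    rcases le_total k k' with h | h
    · obtain ⟨rfl, rfl⟩ := key i hp.1 i' hp'.1 k k' h (by omega) heq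
      rfl
    · obtain ⟨rfl, rfl⟩ := key i' hp'.1 i hp.1 k' k h (by omega) heq.symm
      rfl
  simpa using card_le_card_of_injOn _ hmaps hinjOn

section nextIn

variable {π : Equiv.Perm (Fin n)} {E : Finset (Fin n)} {x : Fin n}

theorem exists_nextIn_eq_iterate : ∃ k, nextIn π E x = (⇑π)^[k] x := by
  unfold nextIn
  split_ifs
  exacts [⟨_, rfl⟩, ⟨0, rfl⟩]

theorem nextIn_eq_iterate_of_minimal {m : ℕ} (hm : 0 < m) (hmE : (⇑π)^[m] x ∈ E)
    (hmin : ∀ j, 0 < j → j < m → (⇑π)^[j] x ∉ E) : nextIn π E x = (⇑π)^[m] x := by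
  have h : ∃ k, 0 < k ∧ (⇑π)^[k] x ∈ E := ⟨m, hm, hmE⟩
  rw [nextIn, dif_pos h, (Nat.find_eq_iff h).2 ⟨⟨hm, hmE⟩, fun j hj hjE => hmin j hjE.1 hj hjE.2⟩]

theorem exists_nextIn_eq_first_return (hx : x ∈ E) :
    ∃ m, 0 < m ∧ (⇑π)^[m] x ∈ E ∧ (∀ j, 0 < j → j < m → (⇑π)^[j] x ∉ E) ∧
      nextIn π E x = (⇑π)^[m] x := by
  have h : ∃ k, 0 < k ∧ (⇑π)^[k] x ∈ E :=
    ⟨_, Function.minimalPeriod_pos_of_mem_periodicPts (π.injective.mem_periodicPts x),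
      (Function.iterate_minimalPeriod (f := ⇑π)).symm ▸ hx⟩
  exact ⟨Nat.find h, (Nat.find_spec h).1, (Nat.find_spec h).2,
    fun j hj hjm hjE => Nat.find_min h hjm ⟨hj, hjE⟩, dif_pos h⟩

theorem mapsTo_nextIn : Set.MapsTo (nextIn π E) E E := fun _ hx => by
  obtain ⟨m, -, hmE, -, heq⟩ := exists_nextIn_eq_first_return (π := π) hx
  exact heq ▸ hmE

theorem Set.MapsTo.nextIn {C : Finset (Fin n)} (hC : Set.MapsTo π C C) :
    Set.MapsTo (nextIn π E) C C := fun x hx => by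
  obtain ⟨k, hk⟩ := exists_nextIn_eq_iterate (π := π) (E := E) (x := x)
  exact hk ▸ hC.iterate k hx

theorem iterate_inv_iterate_of_le {j m : ℕ} (hjm : j ≤ m) (x : Fin n) :
    (⇑π⁻¹)^[j] ((⇑π)^[m] x) = (⇑π)^[m - j] x := by
  obtain ⟨k, rfl⟩ := Nat.exists_eq_add_of_le hjm
  rw [Function.iterate_add_apply, Nat.add_sub_cancel_left]
  exact Function.LeftInverse.iterate (g := ⇑π⁻¹) π.symm_apply_apply j _

theorem leftInvOn_nextIn_inv : Set.LeftInvOn (nextIn π⁻¹ E) (nextIn π E) E := fun x hx => by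
  obtain ⟨m, hm, -, hmin, heq⟩ := exists_nextIn_eq_first_return (π := π) hx
  have hback : (⇑π⁻¹)^[m] ((⇑π)^[m] x) = x := by
    rw [iterate_inv_iterate_of_le le_rfl, Nat.sub_self, Function.iterate_zero_apply]
  rw [heq, nextIn_eq_iterate_of_minimal hm (by rwa [hback]), hback]
  intro j hj hjm
  rw [iterate_inv_iterate_of_le hjm.le]
  exact hmin _ (by omega) (by omega)

end nextIn

section level

variable {π : Equiv.Perm (Fin n)} {b r : ℕ}

theorem mem_level_succ {i : Fin n} :
    i ∈ level π b (r + 1) ↔ i ∈ level π b r ∧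
      (∀ k ∈ Icc 1 b, i < (nextIn π (level π b r))^[k] i) ∧
      (∀ k ∈ Icc 1 b, i < (nextIn π⁻¹ (level π b r))^[k] i) := by
  simp only [level, mem_filter]

theorem level_succ_subset : level π b (r + 1) ⊆ level π b r :=
  fun _ hi => (mem_level_succ.1 hi).1

theorem iterate_nextIn_level_ne {i i' : Fin n} (hi : i ∈ level π b (r + 1))
    (hi' : i' ∈ level π b (r + 1)) {d : ℕ} (hd : d ∈ Icc 1 b) :
    (nextIn π (level π b r))^[d] i' ≠ i := by
  intro heq
  rw [mem_level_succ] at hi hi'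
  have hback : (nextIn π⁻¹ (level π b r))^[d] i = i' :=
    heq ▸ (leftInvOn_nextIn_inv.iterate mapsTo_nextIn d) hi'.1
  exact lt_asymm (heq ▸ hi'.2.1 d hd) (hback ▸ hi.2.2 d hd)

theorem card_level_succ_inter_mul_le {C : Finset (Fin n)} (hC : Set.MapsTo π C C) :
    #(level π b (r + 1) ∩ C) * (b + 1) ≤ #(level π b r ∩ C) := by
  refine card_mul_succ_le_of_iterate_ne (f := nextIn π (level π b r)) ?_ ?_
    (inter_subset_inter_right level_succ_subset) ?_
  · rw [coe_inter]
    exact mapsTo_nextIn.inter_inter hC.nextIn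
  · rw [coe_inter]
    exact (leftInvOn_nextIn_inv.mono Set.inter_subset_left).injOn
  · intro i hi i' hi' d hd
    exact iterate_nextIn_level_ne (mem_inter.1 hi).1 (mem_inter.1 hi').1 hd

variable (r) in
theorem card_level_inter_mul_pow_le {C : Finset (Fin n)} (hC : Set.MapsTo π C C) :
    #(level π b r ∩ C) * (b + 1) ^ r ≤ #C := by
  induction r with
  | zero => simp [level]
  | succ r ih =>
    calc #(level π b (r + 1) ∩ C) * (b + 1) ^ (r + 1)
        = #(level π b (r + 1) ∩ C) * (b + 1) * (b + 1) ^ r := by ring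
      _ ≤ #(level π b r ∩ C) * (b + 1) ^ r := by
        gcongr
        exact card_level_succ_inter_mul_le hC
      _ ≤ #C := ih

end level

theorem mapsTo_cycleOfF (π : Equiv.Perm (Fin n)) (x : Fin n) :
    Set.MapsTo π (cycleOfF π x) (cycleOfF π x) := by
  intro y hy
  simp only [cycleOfF, coe_image, coe_range, Set.mem_image, Set.mem_Iio] at hy ⊢
  obtain ⟨j, -, rfl⟩ := hy
  have hpos := Function.minimalPeriod_pos_of_mem_periodicPts (π.injective.mem_periodicPts x)
  refine ⟨(j + 1) % Function.minimalPeriod π x, ?_, ?_⟩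
  · exact (Nat.mod_lt _ hpos).trans_le
      ((Function.minimalPeriod_le_card (f := ⇑π)).trans (Fintype.card_fin n).le)
  · rw [Function.iterate_mod_minimalPeriod_eq, Function.iterate_succ_apply']

theorem card_level_inter_cycle_le_general (n b : ℕ) (π : Equiv.Perm (Fin n)) (x : Fin n)
    (C : Finset (Fin n)) (hC : C = cycleOfF π x) :
    ∀ r : ℕ, (((level π b r) ∩ C).card : ℝ) ≤ (C.card : ℝ) / ((b : ℝ) + 1) ^ r := by
  intro r
  subst hC
  rw [le_div_iff₀ (by positivity)]
  exact_mod_cast card_level_inter_mul_pow_le r (mapsTo_cycleOfF π x)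

/-- For every cycle `C` of `π` and every `r ≥ 1` (here 0-indexed: `E_{r+1}` is
`level π b r`), the number of elements of `C` on level `r` satisfies
`|E_r ∩ C| ≤ |C| / (b+1)^{r−1}`. -/
theorem card_level_inter_cycle_le (n b : ℕ) (hb : 1 ≤ b) (π : Equiv.Perm (Fin n)) (x : Fin n)
    (C : Finset (Fin n)) (hC : C = cycleOfF π x) :
    ∀ r : ℕ, (((level π b r) ∩ C).card : ℝ) ≤ (C.card : ℝ) / ((b : ℝ) + 1) ^ r :=
  card_level_inter_cycle_le_general n b π x C hC
end

section
/- Let C be a cycle of π, let r ≥ 1, and let m ∈ E_{r+1} ∩ C with |E_{r+1} ∩ C| ≥ 2. Then the element π_1(π_2(…(π_r(m))…)) appears strictly before π_{r+1}(m) when traversing the cycle from m along π; that is, len(m, π_1(π_2(…(π_r(m))…))) < len(m, π_{r+1}(m)), where len(u, w) = min{k > 0 : π^k(u) = w}. -/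
/-!
Let `y = π_{r+1}(m)` be the first element of `E_{r+1}` after `m` on the cycle. Every element of
`E_{s+1}` is a local minimum of `π_s` on its cycle. Hence, if `w` and `y` both lie in `E_{s+1}`,
`π_s(w)` cannot be `y`: otherwise `π_s⁻¹(y) = w` and `w < y < w`. So `π_s(w)` lies strictly between
`w` and `y` on the cycle, and descending `s = r, r - 1, …, 1` from `w = m` keeps
`π_1(…(π_r(m))…)` strictly inside the arc from `m` to `y`.
-/

attribute [local instance] Classical.propDecidable

variable {n : ℕ}

/-- `chainDown π b r m = π_1(π_2(…(π_r(m))…))` (with `π_{k} = nextIn π (level π b (k-1))`). -/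
noncomputable def chainDown (π : Equiv.Perm (Fin n)) (b : ℕ) : ℕ → Fin n → Fin n
  | 0, m => m
  | r + 1, m => chainDown π b r (nextIn π (level π b r) m)

/-- `len(u,w) = min{k > 0 : π^k(u) = w}` (0 if unreachable). -/
noncomputable def lenTo (π : Equiv.Perm (Fin n)) (u w : Fin n) : ℕ :=
  if h : ∃ k, 0 < k ∧ (⇑π)^[k] u = w then Nat.find h else 0

variable {π : Equiv.Perm (Fin n)}

section nextIn

variable {E : Finset (Fin n)} {x : Fin n}

theorem nextIn_eq_iterate_find (h : ∃ k, 0 < k ∧ (⇑π)^[k] x ∈ E) :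
    nextIn π E x = (⇑π)^[Nat.find h] x :=
  dif_pos h

theorem nextIn_mem (h : ∃ k, 0 < k ∧ (⇑π)^[k] x ∈ E) : nextIn π E x ∈ E := by
  rw [nextIn_eq_iterate_find h]
  exact (Nat.find_spec h).2

theorem nextIn_eq_iterate_of_minimal_s10 {K : ℕ} (hK : 0 < K) (hmem : (⇑π)^[K] x ∈ E)
    (hmin : ∀ k, 0 < k → k < K → (⇑π)^[k] x ∉ E) :
    nextIn π E x = (⇑π)^[K] x := by
  have h : ∃ k, 0 < k ∧ (⇑π)^[k] x ∈ E := ⟨K, hK, hmem⟩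
  rw [nextIn_eq_iterate_find h,
    (Nat.find_eq_iff h).2 ⟨⟨hK, hmem⟩, fun k hk hkE => hmin k hkE.1 hk hkE.2⟩]

theorem exists_pos_iterate_mem (hx : x ∈ E) : ∃ k, 0 < k ∧ (⇑π)^[k] x ∈ E := by
  refine ⟨orderOf π, orderOf_pos π, ?_⟩
  rwa [← Equiv.Perm.coe_pow, pow_orderOf_eq_one, Equiv.Perm.coe_one, id]

end nextIn

theorem lenTo_le {u w : Fin n} {k : ℕ} (hk : 0 < k) (hkw : (⇑π)^[k] u = w) :
    lenTo π u w ≤ k := by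
  have h : ∃ k, 0 < k ∧ (⇑π)^[k] u = w := ⟨k, hk, hkw⟩
  rw [lenTo, dif_pos h]
  exact Nat.find_min' h ⟨hk, hkw⟩

theorem lenTo_nextIn {E : Finset (Fin n)} {x : Fin n} (h : ∃ k, 0 < k ∧ (⇑π)^[k] x ∈ E) :
    lenTo π x (nextIn π E x) = Nat.find h := by
  have hreach : ∃ k, 0 < k ∧ (⇑π)^[k] x = nextIn π E x :=
    ⟨Nat.find h, (Nat.find_spec h).1, (nextIn_eq_iterate_find h).symm⟩
  rw [lenTo, dif_pos hreach, Nat.find_eq_iff]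
  refine ⟨⟨(Nat.find_spec h).1, (nextIn_eq_iterate_find h).symm⟩, fun k hk ⟨hk0, hkx⟩ => ?_⟩
  exact Nat.find_min h hk ⟨hk0, hkx ▸ nextIn_mem h⟩

theorem Equiv.Perm.iterate_inv_iterate {α : Type*} (σ : Equiv.Perm α) {k d : ℕ} (hk : k ≤ d)
    (a : α) : (⇑σ⁻¹)^[k] ((⇑σ)^[d] a) = (⇑σ)^[d - k] a := by
  rw [← Nat.add_sub_cancel' hk, Function.iterate_add_apply, Nat.add_sub_cancel_left]
  exact (Function.LeftInverse.iterate σ.left_inv k) _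

theorem mem_level_one_succ {s : ℕ} {i : Fin n} :
    i ∈ level π 1 (s + 1) ↔
      i ∈ level π 1 s ∧ i < nextIn π (level π 1 s) i ∧ i < nextIn π⁻¹ (level π 1 s) i := by
  simp only [level, Finset.mem_filter, Finset.Icc_self, Finset.mem_singleton, forall_eq,
    Function.iterate_one]

theorem exists_iterate_eq_nextIn_lt {E : Finset (Fin n)} {w y : Fin n} {d : ℕ} (hd : 0 < d)
    (hw : w ∈ E) (hy : y ∈ E) (hwy : (⇑π)^[d] w = y)
    (hw_lt : w < nextIn π E w) (hy_lt : y < nextIn π⁻¹ E y) :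
    ∃ K, 0 < K ∧ K < d ∧ (⇑π)^[K] w = nextIn π E w := by
  have h : ∃ k, 0 < k ∧ (⇑π)^[k] w ∈ E := ⟨d, hd, hwy ▸ hy⟩
  refine ⟨Nat.find h, (Nat.find_spec h).1, ?_, (nextIn_eq_iterate_find h).symm⟩
  refine lt_of_le_of_ne (Nat.find_min' h ⟨hd, hwy ▸ hy⟩) fun hK => ?_
  have hnext : nextIn π E w = y := by rw [nextIn_eq_iterate_find h, hK, hwy]
  -- no element of `E` lies strictly between `w` and `y`, so `π_E⁻¹(y) = w`
  have hprev : nextIn π⁻¹ E y = w := by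
    have hback : (⇑π⁻¹)^[d] y = w := by rw [← hwy, π.iterate_inv_iterate le_rfl, Nat.sub_self]; rfl
    rw [nextIn_eq_iterate_of_minimal_s10 hd (hback ▸ hw) fun k hk hkd => ?_, hback]
    rw [← hwy, π.iterate_inv_iterate hkd.le]
    exact fun hE => Nat.find_min h (show d - k < Nat.find h by omega) ⟨by omega, hE⟩
  exact lt_asymm (hnext ▸ hw_lt) (hprev ▸ hy_lt)

theorem exists_iterate_eq_chainDown_lt {s : ℕ} {w y : Fin n} {d : ℕ} (hd : 0 < d)
    (hw : w ∈ level π 1 (s + 1)) (hy : y ∈ level π 1 (s + 1)) (hwy : (⇑π)^[d] w = y) :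
    ∃ K, 0 < K ∧ K < d ∧ (⇑π)^[K] w = chainDown π 1 (s + 1) w := by
  induction s generalizing w d with
  | zero => ?_
  | succ s ih => ?_
  all_goals
    obtain ⟨hw₀, hw_lt, -⟩ := mem_level_one_succ.1 hw
    obtain ⟨hy₀, -, hy_lt⟩ := mem_level_one_succ.1 hy
    obtain ⟨K, hK, hKd, hKw⟩ := exists_iterate_eq_nextIn_lt hd hw₀ hy₀ hwy hw_lt hy_lt
  · exact ⟨K, hK, hKd, hKw⟩
  · have hw'y : (⇑π)^[d - K] (nextIn π (level π 1 (s + 1)) w) = y := by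
      rw [← hKw, ← Function.iterate_add_apply, Nat.sub_add_cancel hKd.le, hwy]
    obtain ⟨K', hK', hK'd, hK'w⟩ := ih (by omega) (nextIn_mem ⟨d, hd, hwy ▸ hy₀⟩) hy₀ hw'y
    refine ⟨K' + K, by omega, by omega, ?_⟩
    rw [Function.iterate_add_apply, hKw, hK'w]
    rfl

theorem nested_elbows_general (n : ℕ) (π : Equiv.Perm (Fin n)) (m : Fin n) (r : ℕ) (hr : 1 ≤ r)
    (hm : m ∈ level π 1 r) :
    lenTo π m (chainDown π 1 r m) < lenTo π m (nextIn π (level π 1 r) m) := by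
  obtain ⟨s, rfl⟩ : ∃ s, r = s + 1 := ⟨r - 1, by omega⟩
  have h := exists_pos_iterate_mem (π := π) hm
  obtain ⟨K, hK, hKL, hKm⟩ := exists_iterate_eq_chainDown_lt (Nat.find_spec h).1 hm
    (nextIn_mem h) (nextIn_eq_iterate_find h).symm
  calc lenTo π m (chainDown π 1 (s + 1) m) ≤ K := lenTo_le hK hKm
    _ < Nat.find h := hKL
    _ = lenTo π m (nextIn π (level π 1 (s + 1)) m) := (lenTo_nextIn h).symm

/-- (Fich et al., `b = 1`; `E_{r+1} = level π 1 r`, 0-indexed.)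
Let `C` be a cycle of `π`, `r ≥ 1`, and `m ∈ E_{r+1} ∩ C` with `|E_{r+1} ∩ C| ≥ 2`.  Then
`π_1(π_2(…(π_r(m))…))` appears strictly before `π_{r+1}(m)` when traversing the cycle from `m`
along `π`: `len(m, π_1(π_2(…(π_r(m))…))) < len(m, π_{r+1}(m))`. -/
theorem nested_elbows (n : ℕ) (π : Equiv.Perm (Fin n)) (m : Fin n) (r : ℕ) (hr : 1 ≤ r)
    (hm : m ∈ level π 1 r)
    (hcard : 2 ≤ ((level π 1 r) ∩ cycleOfF π m).card) :
    lenTo π m (chainDown π 1 r m) < lenTo π m (nextIn π (level π 1 r) m) :=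
  nested_elbows_general n π m r hr hm
end

section
/- Let α be a finite set, f : α → α a function, and x ∈ α. Let μ ≥ 0 be the least index such that f^μ(x) = f^{j}(x) for some j > μ, and let ℓ ≥ 1 be the least positive integer with f^{μ+ℓ}(x) = f^μ(x). Then: (i) there exists k with 1 ≤ k ≤ μ + ℓ such that f^k(x) = f^{2k}(x); and (ii) for every k ≥ 1 with f^k(x) = f^{2k}(x), ℓ divides k, and the least index j ≥ 0 with f^j(x) = f^{j+k}(x) equals μ (so the element f^μ(x), the first element of the orbit lying on its eventual cycle, is found by advancing two pointers from x and f^k(x) in lockstep). -/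
/-!
Put `y = f^[μ] x`; the hypotheses on `ℓ` say exactly that `y` is a periodic point of minimal
period `ℓ`, and then so is every `f^[n] x` with `n ≥ μ`. For `k ≥ μ`, the equation
`f^[k] x = f^[2k] x` says that `f^[k] x` is a periodic point of period `k`, i.e. `ℓ ∣ k`. The least
multiple of `ℓ` exceeding `μ` is at most `μ + ℓ`, which gives (i); conversely a meeting index `k`
cannot be smaller than `μ`, by the minimality of `μ`, which gives (ii).
-/

open Function

namespace Function

variable {α : Type*} {f : α → α}

theorem minimalPeriod_eq_of_isPeriodicPt {y : α} {ℓ : ℕ} (hℓ : 0 < ℓ) (hy : IsPeriodicPt f ℓ y)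
    (hmin : ∀ m, 0 < m → m < ℓ → ¬IsPeriodicPt f m y) : minimalPeriod f y = ℓ :=
  (hy.minimalPeriod_le hℓ).antisymm <| not_lt.1 fun hlt =>
    hmin _ (hy.minimalPeriod_pos hℓ) hlt (isPeriodicPt_minimalPeriod f y)

theorem iterate_eq_iterate_two_mul_iff {x : α} {μ k : ℕ} (hx : f^[μ] x ∈ periodicPts f)
    (hk : μ ≤ k) : f^[k] x = f^[2 * k] x ↔ minimalPeriod f (f^[μ] x) ∣ k := by
  have hcycle : f^[k] x = f^[k - μ] (f^[μ] x) := by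
    rw [← iterate_add_apply, Nat.sub_add_cancel hk]
  have hperiod : minimalPeriod f (f^[k] x) = minimalPeriod f (f^[μ] x) := by
    rw [hcycle, minimalPeriod_apply_iterate hx]
  rw [← hperiod, ← isPeriodicPt_iff_minimalPeriod_dvd, IsPeriodicPt, IsFixedPt, two_mul,
    iterate_add_apply, eq_comm]

end Function

theorem tortoise_and_hare_general {α : Type*} (f : α → α) (x : α) (μ ℓ : ℕ)
    (hμmin : ∀ μ' < μ, ¬ ∃ j, μ' < j ∧ f^[μ'] x = f^[j] x)
    (hℓpos : 1 ≤ ℓ) (hℓ : f^[μ + ℓ] x = f^[μ] x)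
    (hℓmin : ∀ ℓ', 1 ≤ ℓ' → ℓ' < ℓ → f^[μ + ℓ'] x ≠ f^[μ] x) :
    (∃ k, 1 ≤ k ∧ k ≤ μ + ℓ ∧ f^[k] x = f^[2 * k] x) ∧
    (∀ k, 1 ≤ k → f^[k] x = f^[2 * k] x →
      ℓ ∣ k ∧ f^[μ] x = f^[μ + k] x ∧ ∀ j < μ, f^[j] x ≠ f^[j + k] x) := by
  have hy : IsPeriodicPt f ℓ (f^[μ] x) := by
    rwa [IsPeriodicPt, IsFixedPt, ← iterate_add_apply, add_comm]
  have hperiod : minimalPeriod f (f^[μ] x) = ℓ :=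
    minimalPeriod_eq_of_isPeriodicPt hℓpos hy fun m hm hml hpt =>
      hℓmin m hm hml (by rwa [add_comm, iterate_add_apply])
  have hmem : f^[μ] x ∈ periodicPts f := ⟨ℓ, hℓpos, hy⟩
  constructor
  · have hgt : μ < ℓ * (μ / ℓ + 1) := Nat.lt_mul_div_succ μ hℓpos
    have hle : ℓ * (μ / ℓ + 1) ≤ μ + ℓ := by
      rw [mul_add_one]
      exact Nat.add_le_add_right (Nat.mul_div_le μ ℓ) ℓ
    refine ⟨ℓ * (μ / ℓ + 1), by omega, hle, ?_⟩
    exact (iterate_eq_iterate_two_mul_iff hmem hgt.le).2 (hperiod ▸ dvd_mul_right _ _)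
  · intro k hk hmeet
    have hμk : μ ≤ k := not_lt.1 fun hlt => hμmin k hlt ⟨2 * k, by omega, hmeet⟩
    have hdvd : ℓ ∣ k := hperiod ▸ (iterate_eq_iterate_two_mul_iff hmem hμk).1 hmeet
    refine ⟨hdvd, ?_, fun j hj hje => hμmin j hj ⟨j + k, by omega, hje⟩⟩
    rw [add_comm, iterate_add_apply]
    exact (isPeriodicPt_iff_minimalPeriod_dvd.2 (hperiod ▸ hdvd)).eq.symm

/-- **correctness of Floyd's tortoise-and-hare.**  Let `α` be a finite set,
`f : α → α` and `x ∈ α`.  Let `μ ≥ 0` be the least index such that `f^μ(x) = f^j(x)` for some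
`j > μ`, and let `ℓ ≥ 1` be the least positive integer with `f^{μ+ℓ}(x) = f^μ(x)`.  Then:
(i) there exists `k` with `1 ≤ k ≤ μ + ℓ` such that `f^k(x) = f^{2k}(x)`; and
(ii) for every `k ≥ 1` with `f^k(x) = f^{2k}(x)`, `ℓ` divides `k`, and the least index `j ≥ 0`
with `f^j(x) = f^{j+k}(x)` equals `μ`. -/
theorem tortoise_and_hare {α : Type*} [Fintype α] (f : α → α) (x : α) (μ ℓ : ℕ)
    (hμ : ∃ j, μ < j ∧ f^[μ] x = f^[j] x)
    (hμmin : ∀ μ' < μ, ¬ ∃ j, μ' < j ∧ f^[μ'] x = f^[j] x)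
    (hℓpos : 1 ≤ ℓ) (hℓ : f^[μ + ℓ] x = f^[μ] x)
    (hℓmin : ∀ ℓ', 1 ≤ ℓ' → ℓ' < ℓ → f^[μ + ℓ'] x ≠ f^[μ] x) :
    (∃ k, 1 ≤ k ∧ k ≤ μ + ℓ ∧ f^[k] x = f^[2 * k] x) ∧
    (∀ k, 1 ≤ k → f^[k] x = f^[2 * k] x →
      ℓ ∣ k ∧ f^[μ] x = f^[μ + k] x ∧ ∀ j < μ, f^[j] x ≠ f^[j + k] x) :=
  tortoise_and_hare_general f x μ ℓ hμmin hℓpos hℓ hℓmin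
end
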